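/- arXiv:2404.17527 — 3 statements merged into one kernel-verified Lean document; each statement's English description precedes it below -/
import Mathlib

section
/- Suppose β, γ ∈ (0,1) with β² + γ² = 1, L > 0, sin(γL) = γ and cos(γL) = −β. For z ∈ [0, L], define I_{z,1} = ∫₀^z e^{−βx} sin(γ(L−x)) dx and Ĩ_{z,3} = (1+8γ²)·∫₀^z e^{−βx} sin(3γ(L−x)) dx. Then 3 I_{z,1} − Ĩ_{z,3} = 16βγ³ − 4 e^{−βz} sin(γ(L−z))² (β sin(γ(L−z)) − 3γ cos(γ(L−z))). -/
open Real

/-! The derivative of `e^{-βx} (-β sin (c (L - x)) + c cos (c (L - x)))` is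
`(β² + c²) e^{-βx} sin (c (L - x))`. Since `β² + γ² = 1` and `β² + 9γ² = 1 + 8γ²`, both terms of the
combination are boundary values of these primitives for `c = γ` and `c = 3γ`. The triple-angle
formulas reduce the boundary values to `sin` and `cos` of `γ (L - z)` and of `γL`, the latter being
`γ` and `-β`. -/

noncomputable def dampedSinPrimitive (β c L x : ℝ) : ℝ :=
  exp (-(β * x)) * (-β * sin (c * (L - x)) + c * cos (c * (L - x)))

theorem hasDerivAt_dampedSinPrimitive (β c L x : ℝ) :
    HasDerivAt (dampedSinPrimitive β c L)
      ((β ^ 2 + c ^ 2) * (exp (-(β * x)) * sin (c * (L - x)))) x := by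
  have hexp : HasDerivAt (fun x ↦ exp (-(β * x))) (exp (-(β * x)) * -β) x := by
    simpa using ((hasDerivAt_id x).const_mul β).neg.exp
  have harg : HasDerivAt (fun x ↦ c * (L - x)) (-c) x := by
    simpa using ((hasDerivAt_id x).const_sub L).const_mul c
  have h := hexp.mul ((harg.sin.const_mul (-β)).add (harg.cos.const_mul c))
  refine h.congr_deriv ?_
  simp only [Pi.add_apply]
  ring

theorem mul_integral_exp_mul_sin (β c L a b : ℝ) :
    (β ^ 2 + c ^ 2) * ∫ x in a..b, exp (-(β * x)) * sin (c * (L - x))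
      = dampedSinPrimitive β c L b - dampedSinPrimitive β c L a := by
  rw [← intervalIntegral.integral_const_mul]
  refine intervalIntegral.integral_eq_sub_of_hasDerivAt
    (fun x _ ↦ hasDerivAt_dampedSinPrimitive β c L x) (Continuous.intervalIntegrable ?_ _ _)
  fun_prop

theorem combination_Iz1_Iz3_general (β γ L z : ℝ) (hpyth : β^2 + γ^2 = 1)
    (hsin : Real.sin (γ * L) = γ) (hcos : Real.cos (γ * L) = -β) :
    3 * (∫ x in (0:ℝ)..z, Real.exp (-(β * x)) * Real.sin (γ * (L - x)))
      - (1 + 8 * γ^2) * ∫ x in (0:ℝ)..z, Real.exp (-(β * x)) * Real.sin (3 * γ * (L - x))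
      = 16 * β * γ^3
        - 4 * Real.exp (-(β * z)) * Real.sin (γ * (L - z))^2
            * (β * Real.sin (γ * (L - z)) - 3 * γ * Real.cos (γ * (L - z))) := by
  have hI1 := mul_integral_exp_mul_sin β γ L 0 z
  have hI3 := mul_integral_exp_mul_sin β (3 * γ) L 0 z
  rw [hpyth, one_mul] at hI1
  rw [show (1 : ℝ) + 8 * γ ^ 2 = β ^ 2 + (3 * γ) ^ 2 by linear_combination -hpyth, hI1, hI3]
  simp only [dampedSinPrimitive, mul_zero, neg_zero, exp_zero, one_mul, sub_zero, mul_assoc 3 γ,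
    sin_three_mul, cos_three_mul, hsin, hcos]
  linear_combination (-12 * γ * cos (γ * (L - z)) * exp (-(β * z))) * sin_sq_add_cos_sq (γ * (L - z))
    - 12 * β * γ * hpyth

theorem combination_Iz1_Iz3 (β γ L z : ℝ) (hβ : β ∈ Set.Ioo (0:ℝ) 1)
    (hγ : γ ∈ Set.Ioo (0:ℝ) 1) (hpyth : β^2 + γ^2 = 1) (hL : 0 < L)
    (hsin : Real.sin (γ * L) = γ) (hcos : Real.cos (γ * L) = -β)
    (hz : z ∈ Set.Icc (0:ℝ) L) :
    3 * (∫ x in (0:ℝ)..z, Real.exp (-(β * x)) * Real.sin (γ * (L - x)))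
      - (1 + 8 * γ^2) * ∫ x in (0:ℝ)..z, Real.exp (-(β * x)) * Real.sin (3 * γ * (L - x))
      = 16 * β * γ^3
        - 4 * Real.exp (-(β * z)) * Real.sin (γ * (L - z))^2
            * (β * Real.sin (γ * (L - z)) - 3 * γ * Real.cos (γ * (L - z))) :=
  combination_Iz1_Iz3_general β γ L z hpyth hsin hcos
end

section
/- The function β ↦ L_β := (arctan(−√(1−β²)/β) + π)/√(1−β²) is strictly increasing on (0,1), satisfies L_β → π/2 as β → 0⁺, and L_β → ∞ as β → 1⁻. -/
/-! For `0 < β < 1` the numerator `arctan (-√(1 - β²) / β) + π` is `arccos (-β)`, so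
`L_β = arccos (-β) / √(1 - β²)`: an increasing positive numerator over a decreasing positive
denominator. The numerator is continuous with value `π / 2` at `0` and `π` at `1`, while the
denominator is continuous with value `1` at `0` and tends to `0⁺` at `1`. -/

open Real Filter Set Topology

lemma arctan_neg_sqrt_div_add_pi {x : ℝ} (hx : 0 < x) :
    arctan (-√(1 - x ^ 2) / x) + π = arccos (-x) := by
  rw [arccos_neg, arccos_eq_arctan hx, neg_div, arctan_neg]
  ring

lemma strictMonoOn_arccos_neg_div_sqrt :
    StrictMonoOn (fun x : ℝ => arccos (-x) / √(1 - x ^ 2)) (Ico 0 1) := by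
  intro a ha b hb hab
  have hsqrt_a : 0 < √(1 - a ^ 2) := sqrt_pos.mpr (by nlinarith [ha.1, ha.2])
  have hsqrt_b : 0 < √(1 - b ^ 2) := sqrt_pos.mpr (by nlinarith [hb.1, hb.2])
  have hnum : arccos (-a) < arccos (-b) :=
    strictAntiOn_arccos ⟨by linarith [hb.2], by linarith [hb.1]⟩
      ⟨by linarith [ha.2], by linarith [ha.1]⟩ (neg_lt_neg hab)
  have hden : √(1 - b ^ 2) < √(1 - a ^ 2) :=
    sqrt_lt_sqrt (by nlinarith [hb.1, hb.2]) (by nlinarith [ha.1])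
  calc arccos (-a) / √(1 - a ^ 2)
      < arccos (-b) / √(1 - a ^ 2) := div_lt_div_of_pos_right hnum hsqrt_a
    _ < arccos (-b) / √(1 - b ^ 2) :=
        div_lt_div_of_pos_left (arccos_pos.mpr (by linarith [hb.1])) hsqrt_b hden

lemma tendsto_arccos_neg_div_sqrt_zero :
    Tendsto (fun x : ℝ => arccos (-x) / √(1 - x ^ 2)) (𝓝 0) (𝓝 (π / 2)) := by
  have hcont : ContinuousAt (fun x : ℝ => arccos (-x) / √(1 - x ^ 2)) 0 := by
    fun_prop (disch := norm_num)
  simpa [arccos_zero] using hcont.tendsto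

lemma tendsto_sqrt_one_sub_sq_nhdsLT_one :
    Tendsto (fun x : ℝ => √(1 - x ^ 2)) (𝓝[<] 1) (𝓝[>] 0) := by
  have hcont : Continuous fun x : ℝ => √(1 - x ^ 2) := by fun_prop
  refine tendsto_nhdsWithin_of_tendsto_nhds_of_eventually_within _ ?_ ?_
  · simpa using (hcont.tendsto 1).mono_left nhdsWithin_le_nhds
  · filter_upwards [Ioo_mem_nhdsLT (neg_lt_self one_pos)] with x hx
    exact sqrt_pos.mpr (by nlinarith [hx.1, hx.2])

lemma tendsto_arccos_neg_div_sqrt_one :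
    Tendsto (fun x : ℝ => arccos (-x) / √(1 - x ^ 2)) (𝓝[<] 1) atTop := by
  have hnum : Tendsto (fun x : ℝ => arccos (-x)) (𝓝[<] 1) (𝓝 π) := by
    simpa [arccos_neg_one, Function.comp_def] using
      ((continuous_arccos.comp continuous_neg).tendsto 1).mono_left nhdsWithin_le_nhds
  simpa only [div_eq_mul_inv, Pi.inv_apply] using
    hnum.pos_mul_atTop pi_pos tendsto_sqrt_one_sub_sq_nhdsLT_one.inv_tendsto_nhdsGT_zero

theorem L_beta_monotone_limits :
    StrictMonoOn
      (fun β : ℝ => (Real.arctan (-Real.sqrt (1 - β^2) / β) + Real.pi) / Real.sqrt (1 - β^2))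
      (Set.Ioo 0 1) ∧
    Tendsto
      (fun β : ℝ => (Real.arctan (-Real.sqrt (1 - β^2) / β) + Real.pi) / Real.sqrt (1 - β^2))
      (nhdsWithin 0 (Set.Ioo 0 1)) (nhds (Real.pi / 2)) ∧
    Tendsto
      (fun β : ℝ => (Real.arctan (-Real.sqrt (1 - β^2) / β) + Real.pi) / Real.sqrt (1 - β^2))
      (nhdsWithin 1 (Set.Ioo 0 1)) atTop := by
  have heq : EqOn (fun x : ℝ => arccos (-x) / √(1 - x ^ 2))
      (fun β : ℝ => (arctan (-√(1 - β ^ 2) / β) + π) / √(1 - β ^ 2)) (Ioo 0 1) :=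
    fun x hx => by simp only [arctan_neg_sqrt_div_add_pi hx.1]
  refine ⟨(strictMonoOn_arccos_neg_div_sqrt.mono Ioo_subset_Ico_self).congr heq, ?_, ?_⟩
  · exact (tendsto_arccos_neg_div_sqrt_zero.mono_left nhdsWithin_le_nhds).congr'
      heq.eventuallyEq_nhdsWithin
  · exact (tendsto_arccos_neg_div_sqrt_one.mono_left
      (nhdsWithin_mono _ fun x hx => hx.2)).congr' heq.eventuallyEq_nhdsWithin
end

section
/- Suppose λ is an eigenvalue of the Sturm–Liouville problem (1/2)v'' = λv on (0,L) with v'(0) = βv(0), v(L) = 0, and v not identically zero, where β > 0 and L > 0. Then λ < 0, and writing μ = √(−2λ), one has tan(μL) = −μ/β. -/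
/-!
On `[0, L]` the eigenfunction solves `v'' = c v` with `c = 2λ`. If `c ≥ 0`, then `(v v')' = v'² + c v² ≥ 0`,
so `β v(0)² = (v v')(0) ≤ (v v')(L) = 0`; thus `v(0) = 0 = v'(0)` and uniqueness for the linear ODE
forces `v ≡ 0`. If `c = -μ² < 0`, the Wronskian of `v` and `u(x) = sin (μ (L - x))` is constant; it
vanishes at `L`, and at `0` it equals `v(0) (μ cos (μL) + β sin (μL))`, with `v(0) ≠ 0` as before.
-/

open Real Set

section SecondOrderLinear

variable {a b c : ℝ} {v v' : ℝ → ℝ}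

theorem eqOn_zero_of_hasDerivAt_deriv_eq_mul
    (hv : ∀ x ∈ Icc a b, HasDerivAt v (v' x) x)
    (hv' : ∀ x ∈ Icc a b, HasDerivAt v' (c * v x) x) (h₀ : v a = 0) (h₀' : v' a = 0) :
    EqOn v 0 (Icc a b) := by
  let A : (ℝ × ℝ) →L[ℝ] ℝ × ℝ :=
    (ContinuousLinearMap.snd ℝ ℝ ℝ).prod (c • ContinuousLinearMap.fst ℝ ℝ ℝ)
  have hpair : ∀ x ∈ Icc a b, HasDerivAt (fun y => (v y, v' y)) (A (v x, v' x)) x :=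
    fun x hx => (hv x hx).prodMk (hv' x hx)
  have hzero : EqOn (fun y => (v y, v' y)) (fun _ => 0) (Icc a b) :=
    ODE_solution_unique (v := fun _ p => A p) (fun _ => A.lipschitz)
      (fun x hx => (hpair x hx).continuousAt.continuousWithinAt)
      (fun x hx => (hpair x (Ico_subset_Icc_self hx)).hasDerivWithinAt)
      continuousOn_const (fun x _ => by simpa using (hasDerivWithinAt_const x _ (0 : ℝ × ℝ)))
      (by simp [h₀, h₀'])
  exact fun x hx => congrArg Prod.fst (hzero hx)

theorem monotoneOn_mul_deriv_of_nonneg (hc : 0 ≤ c)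
    (hv : ∀ x ∈ Icc a b, HasDerivAt v (v' x) x)
    (hv' : ∀ x ∈ Icc a b, HasDerivAt v' (c * v x) x) :
    MonotoneOn (fun x => v x * v' x) (Icc a b) := by
  have hprod : ∀ x ∈ Icc a b,
      HasDerivAt (fun y => v y * v' y) (v' x * v' x + v x * (c * v x)) x :=
    fun x hx => (hv x hx).mul (hv' x hx)
  refine monotoneOn_of_hasDerivWithinAt_nonneg (convex_Icc a b)
    (fun x hx => (hprod x hx).continuousAt.continuousWithinAt)
    (fun x hx => (hprod x (interior_subset hx)).hasDerivWithinAt) fun x _ => ?_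
  nlinarith [mul_self_nonneg (v' x), mul_nonneg hc (mul_self_nonneg (v x))]

theorem wronskian_eq_of_hasDerivAt_deriv_eq_mul {u u' : ℝ → ℝ}
    (hu : ∀ x ∈ Icc a b, HasDerivAt u (u' x) x)
    (hu' : ∀ x ∈ Icc a b, HasDerivAt u' (c * u x) x)
    (hv : ∀ x ∈ Icc a b, HasDerivAt v (v' x) x)
    (hv' : ∀ x ∈ Icc a b, HasDerivAt v' (c * v x) x) :
    ∀ x ∈ Icc a b, u x * v' x - u' x * v x = u a * v' a - u' a * v a := by
  have hW : ∀ x ∈ Icc a b, HasDerivAt (fun y => u y * v' y - u' y * v y) 0 x := by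
    intro x hx
    exact (((hu x hx).mul (hv' x hx)).sub ((hu' x hx).mul (hv x hx))).congr_deriv (by ring)
  exact constant_of_has_deriv_right_zero
    (fun x hx => (hW x hx).continuousAt.continuousWithinAt)
    (fun x hx => (hW x (Ico_subset_Icc_self hx)).hasDerivWithinAt)

end SecondOrderLinear

theorem hasDerivAt_mul_sub (μ L x : ℝ) : HasDerivAt (fun y => μ * (L - y)) (-μ) x := by
  simpa using ((hasDerivAt_id x).const_sub L).const_mul μ

theorem hasDerivAt_sin_mul_sub (μ L x : ℝ) :
    HasDerivAt (fun y => sin (μ * (L - y))) (-μ * cos (μ * (L - x))) x := by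
  exact (hasDerivAt_mul_sub μ L x).sin.congr_deriv (by ring)

theorem hasDerivAt_neg_mul_cos_mul_sub (μ L x : ℝ) :
    HasDerivAt (fun y => -μ * cos (μ * (L - y))) (-μ ^ 2 * sin (μ * (L - x))) x := by
  exact ((hasDerivAt_mul_sub μ L x).cos.const_mul (-μ)).congr_deriv (by ring)

theorem tan_eq_neg_div_of_mul_cos_add_mul_sin_eq_zero {μ β t : ℝ} (hβ : β ≠ 0)
    (h : μ * cos t + β * sin t = 0) : tan t = -μ / β := by
  have hcos : cos t ≠ 0 := by
    intro hc
    have hs : sin t = 0 := by simpa [hc, hβ] using h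
    simpa [hs, hc] using sin_sq_add_cos_sq t
  rw [tan_eq_sin_div_cos, div_eq_div_iff hcos hβ]
  linarith

theorem SL_eigenvalue_characterization (β L lam : ℝ) (hβ : 0 < β) (hL : 0 < L)
    (v v' v'' : ℝ → ℝ)
    (hv' : ∀ x ∈ Set.Icc (0:ℝ) L, HasDerivAt v (v' x) x)
    (hv'' : ∀ x ∈ Set.Icc (0:ℝ) L, HasDerivAt v' (v'' x) x)
    (hcont : ContinuousOn v'' (Set.Icc (0:ℝ) L))
    (hode : ∀ x ∈ Set.Ioo (0:ℝ) L, (1/2) * v'' x = lam * v x)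
    (hbc0 : v' 0 = β * v 0) (hbcL : v L = 0)
    (hnz : ∃ x ∈ Set.Icc (0:ℝ) L, v x ≠ 0) :
    lam < 0 ∧
      Real.tan (Real.sqrt (-2 * lam) * L) = -Real.sqrt (-2 * lam) / β := by
  have h0 : (0 : ℝ) ∈ Icc 0 L := left_mem_Icc.2 hL.le
  have hLmem : L ∈ Icc 0 L := right_mem_Icc.2 hL.le
  have hode_Icc : EqOn v'' (fun x => 2 * lam * v x) (Icc 0 L) :=
    EqOn.of_subset_closure (fun x hx => by linarith [hode x hx]) hcont
      (continuousOn_const.mul fun x hx => (hv' x hx).continuousAt.continuousWithinAt)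
      Ioo_subset_Icc_self (closure_Ioo hL.ne).ge
  have hsol : ∀ x ∈ Icc 0 L, HasDerivAt v' (2 * lam * v x) x :=
    fun x hx => (hv'' x hx).congr_deriv (hode_Icc hx)
  have hv0 : v 0 ≠ 0 := by
    intro hv0
    obtain ⟨x, hx, hvx⟩ := hnz
    exact hvx (eqOn_zero_of_hasDerivAt_deriv_eq_mul hv' hsol hv0 (by simp [hbc0, hv0]) hx)
  have hlam : lam < 0 := by
    by_contra! hlam
    have := monotoneOn_mul_deriv_of_nonneg (by linarith) hv' hsol h0 hLmem hL.le
    simp only [hbc0, hbcL, zero_mul] at this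
    exact hv0 (by nlinarith [mul_self_pos.2 hv0])
  refine ⟨hlam, ?_⟩
  set μ := √(-2 * lam)
  have hμ : -μ ^ 2 = 2 * lam := by rw [sq_sqrt (by linarith)]; ring
  have hwronskian := wronskian_eq_of_hasDerivAt_deriv_eq_mul
    (fun x _ => hasDerivAt_sin_mul_sub μ L x)
    (fun x _ => hμ ▸ hasDerivAt_neg_mul_cos_mul_sub μ L x) hv' hsol L hLmem
  simp only [sub_self, mul_zero, sin_zero, cos_zero, hbcL, hbc0, sub_zero] at hwronskian
  refine tan_eq_neg_div_of_mul_cos_add_mul_sin_eq_zero hβ.ne' ?_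
  exact (mul_eq_zero.1 (by linear_combination -hwronskian : v 0 * _ = 0)).resolve_left hv0
end
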